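/- arXiv:2509.07444 — 3 statements merged into one kernel-verified Lean document; each statement's English description precedes it below -/
import Mathlib

section
/- Let C ⊆ ℝ^d be a finite nonempty set, and for x ∈ ℝ^d let C(x) denote a point of C at minimum Euclidean distance from x. Then for all points p, c* ∈ ℝ^d and every real r ≥ ‖p − c*‖, it holds that ‖C(p) − c*‖ ≤ 4·max{r, ‖c* − C(c*)‖}. -/
open MeasureTheory ProbabilityTheory Metric
open scoped ENNReal NNReal Classical

noncomputable def gaussianJL (t d : ℕ) : Measure (Fin t → Fin d → ℝ) :=
  Measure.pi fun _ : Fin t => Measure.pi fun _ : Fin d => gaussianReal 0 (t : ℝ≥0)⁻¹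

noncomputable def appJL {t d : ℕ} (G : Fin t → Fin d → ℝ)
    (x : EuclideanSpace ℝ (Fin d)) : EuclideanSpace ℝ (Fin t) :=
  WithLp.toLp 2 (fun i => ∑ j, G i j * x j)

noncomputable def nearestDist {d : ℕ} (p : EuclideanSpace ℝ (Fin d))
    (C : Finset (EuclideanSpace ℝ (Fin d))) : ℝ :=
  sInf ((fun c => ‖p - c‖) '' ↑C)

noncomputable def costZ {d : ℕ} (P C : Finset (EuclideanSpace ℝ (Fin d))) (z : ℝ) : ℝ :=
  ∑ p ∈ P, nearestDist p C ^ z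

noncomputable def optZ {d : ℕ} (P Q : Finset (EuclideanSpace ℝ (Fin d))) (k : ℕ) (z : ℝ) : ℝ :=
  sInf {v | ∃ C : Finset (EuclideanSpace ℝ (Fin d)),
    C ⊆ Q ∧ C.Nonempty ∧ C.card ≤ k ∧ v = costZ P C z}

def HasDoublingDim {d : ℕ} (S : Set (EuclideanSpace ℝ (Fin d))) (m : ℝ) : Prop :=
  ∀ x ∈ S, ∀ r > 0, ∃ F : Finset (EuclideanSpace ℝ (Fin d)),
    (F.card : ℝ) ≤ (2 : ℝ) ^ m ∧
      S ∩ closedBall x r ⊆ ⋃ y ∈ F, closedBall y (r / 2)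

theorem dist_le_two_mul_dist_add_dist_of_dist_le {α : Type*} [PseudoMetricSpace α]
    {p q a b : α} (hab : dist p a ≤ dist p b) :
    dist a q ≤ 2 * dist p q + dist q b :=
  calc dist a q ≤ dist p a + dist p q := dist_triangle_left a q p
    _ ≤ dist p b + dist p q := by gcongr
    _ ≤ dist p q + dist q b + dist p q := by gcongr; exact dist_triangle p q b
    _ = 2 * dist p q + dist q b := by ring

theorem nearest_center_distance_bound_general {d : ℕ}
    (C : Finset (EuclideanSpace ℝ (Fin d)))
    (p cstar : EuclideanSpace ℝ (Fin d)) (r : ℝ) (hr : ‖p - cstar‖ ≤ r)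
    (Cp Ccstar : EuclideanSpace ℝ (Fin d)) (hCcstar : Ccstar ∈ C)
    (hCp_min : ∀ c ∈ C, ‖p - Cp‖ ≤ ‖p - c‖) :
    ‖Cp - cstar‖ ≤ 4 * max r ‖cstar - Ccstar‖ := by
  simp only [← dist_eq_norm] at hr hCp_min ⊢
  have hCp_near : dist Cp cstar ≤ 2 * dist p cstar + dist cstar Ccstar :=
    dist_le_two_mul_dist_add_dist_of_dist_le (hCp_min Ccstar hCcstar)
  have hr_le_max := le_max_left r (dist cstar Ccstar)
  have hdist_le_max := le_max_right r (dist cstar Ccstar)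
  linarith [dist_nonneg (x := cstar) (y := Ccstar)]

/-- Bound on the distance from the nearest center C(p) of p to a point c*:
‖C(p) − c*‖ ≤ 4·max{r, ‖c* − C(c*)‖} whenever r ≥ ‖p − c*‖. -/
theorem nearest_center_distance_bound {d : ℕ}
    (C : Finset (EuclideanSpace ℝ (Fin d))) (hC : C.Nonempty)
    (p cstar : EuclideanSpace ℝ (Fin d)) (r : ℝ) (hr : ‖p - cstar‖ ≤ r)
    (Cp Ccstar : EuclideanSpace ℝ (Fin d)) (hCp : Cp ∈ C) (hCcstar : Ccstar ∈ C)
    (hCp_min : ∀ c ∈ C, ‖p - Cp‖ ≤ ‖p - c‖)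
    (hCcstar_min : ∀ c ∈ C, ‖cstar - Ccstar‖ ≤ ‖cstar - c‖) :
    ‖Cp - cstar‖ ≤ 4 * max r ‖cstar - Ccstar‖ :=
  nearest_center_distance_bound_general C p cstar r hr Cp Ccstar hCcstar hCp_min
end

section
/- Let (X, dist) be a metric space, let z ≥ 1 be a real number, and let ε ∈ (0,1). Then for all points p, q, r ∈ X, the following two inequalities hold: (i) dist(p,q)^z ≥ (1 − z·ε)·dist(p,r)^z − ε^{−z}·dist(q,r)^z; and (ii) dist(p,q)^z ≤ (1+ε)^{z−1}·dist(p,r)^z + ((1+ε)/ε)^{z−1}·dist(q,r)^z. -/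
/-!
Both inequalities are convexity of `t ↦ t ^ z` applied to a triangle inequality whose two
summands are rescaled by a pair of Hölder conjugate exponents `u, v` (`u⁻¹ + v⁻¹ = 1`):
`(a + b) ^ z ≤ u ^ (z - 1) * a ^ z + v ^ (z - 1) * b ^ z`.
For (ii) take `u = 1 + ε`, `v = (1 + ε) / ε`. For (i) bound `dist p r` through `q` with
`u = (1 - ε)⁻¹`, `v = ε⁻¹`, multiply by `(1 - ε) ^ (z - 1)`, and use Bernoulli's inequality
`1 - z * ε ≤ (1 - ε) ^ z ≤ (1 - ε) ^ (z - 1)`.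
-/

namespace Real

theorem HolderConjugate.add_rpow_le {u v a b z : ℝ} (huv : u.HolderConjugate v)
    (ha : 0 ≤ a) (hb : 0 ≤ b) (hz : 1 ≤ z) :
    (a + b) ^ z ≤ u ^ (z - 1) * a ^ z + v ^ (z - 1) * b ^ z := by
  have hu := huv.pos
  have hv := huv.symm.pos
  have hconv := (convexOn_rpow hz).2 (mul_nonneg hu.le ha) (mul_nonneg hv.le hb)
    huv.inv_nonneg huv.symm.inv_nonneg huv.inv_add_inv_eq_one
  have hmean : u⁻¹ • (u * a) + v⁻¹ • (v * b) = a + b := by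
    simp only [smul_eq_mul, inv_mul_cancel_left₀ hu.ne', inv_mul_cancel_left₀ hv.ne']
  have hscale {w x : ℝ} (hw : 0 < w) (hx : 0 ≤ x) : w⁻¹ • (w * x) ^ z = w ^ (z - 1) * x ^ z := by
    rw [smul_eq_mul, mul_rpow hw.le hx, rpow_sub_one hw.ne']
    ring
  rwa [hmean, hscale hu ha, hscale hv hb] at hconv

theorem holderConjugate_one_add_div {ε : ℝ} (hε : 0 < ε) :
    (1 + ε).HolderConjugate ((1 + ε) / ε) :=
  (holderConjugate_iff_eq_conjExponent (by linarith)).2 (by ring)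

theorem one_sub_mul_mul_rpow_sub_le_rpow_of_le_add {z ε a b c : ℝ} (hz : 1 ≤ z)
    (hε₀ : 0 < ε) (hε₁ : ε < 1) (ha : 0 ≤ a) (hb : 0 ≤ b) (hc : 0 ≤ c) (habc : a ≤ c + b) :
    (1 - z * ε) * a ^ z - ε⁻¹ ^ z * b ^ z ≤ c ^ z := by
  set w := (1 - ε) ^ (z - 1)
  have hw₀ : 0 ≤ w := rpow_nonneg (by linarith) _
  have hw_inv : w * (1 - ε)⁻¹ ^ (z - 1) = 1 := by
    rw [inv_rpow (by linarith), mul_inv_cancel₀ (rpow_pos_of_pos (by linarith) _).ne']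
  have hsplit : a ^ z ≤ (1 - ε)⁻¹ ^ (z - 1) * c ^ z + ε⁻¹ ^ (z - 1) * b ^ z :=
    (rpow_le_rpow ha habc (by linarith)).trans
      ((HolderConjugate.one_sub_inv_inv hε₀ hε₁).add_rpow_le hc hb hz)
  have hscaled : w * a ^ z ≤ c ^ z + w * ε⁻¹ ^ (z - 1) * b ^ z := by
    have := mul_le_mul_of_nonneg_left hsplit hw₀
    rwa [mul_add, ← mul_assoc, hw_inv, one_mul, ← mul_assoc] at this
  have hbernoulli : 1 - z * ε ≤ w := calc
    1 - z * ε = 1 + z * -ε := by ring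
    _ ≤ (1 + -ε) ^ z := one_add_mul_self_le_rpow_one_add (by linarith) hz
    _ = (1 - ε) ^ z := by ring_nf
    _ ≤ w := rpow_le_rpow_of_exponent_ge (by linarith) (by linarith) (by linarith)
  have hcoeff : w * ε⁻¹ ^ (z - 1) ≤ ε⁻¹ ^ z := calc
    w * ε⁻¹ ^ (z - 1) ≤ 1 * ε⁻¹ ^ (z - 1) :=
      mul_le_mul_of_nonneg_right (rpow_le_one (by linarith) (by linarith) (by linarith))
        (rpow_nonneg (by positivity) _)
    _ ≤ ε⁻¹ ^ z := by
      rw [one_mul]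
      exact rpow_le_rpow_of_exponent_le ((one_le_inv₀ hε₀).2 hε₁.le) (by linarith)
  have := mul_le_mul_of_nonneg_right hbernoulli (rpow_nonneg ha z)
  have := mul_le_mul_of_nonneg_right hcoeff (rpow_nonneg hb z)
  linarith

end Real

/-- Generalized triangle inequalities for the z-th power of a metric. -/
theorem generalized_triangle_inequalities {X : Type*} [MetricSpace X]
    (z ε : ℝ) (hz : 1 ≤ z) (hε : ε ∈ Set.Ioo (0 : ℝ) 1) (p q r : X) :
    (1 - z * ε) * dist p r ^ z - ε⁻¹ ^ z * dist q r ^ z ≤ dist p q ^ z ∧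
    dist p q ^ z ≤ (1 + ε) ^ (z - 1) * dist p r ^ z +
      ((1 + ε) / ε) ^ (z - 1) * dist q r ^ z := by
  obtain ⟨hε₀, hε₁⟩ := hε
  refine ⟨Real.one_sub_mul_mul_rpow_sub_le_rpow_of_le_add hz hε₀ hε₁ dist_nonneg dist_nonneg
    dist_nonneg (dist_triangle p q r), ?_⟩
  calc dist p q ^ z ≤ (dist p r + dist q r) ^ z :=
        Real.rpow_le_rpow dist_nonneg (dist_triangle_right p q r) (by linarith)
    _ ≤ _ := (Real.holderConjugate_one_add_div hε₀).add_rpow_le dist_nonneg dist_nonneg hz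
end

section
/- Let x ∈ ℝ^d, ε ∈ (0,1), t ∈ ℕ with t ≥ 1, and let G ∈ ℝ^{t×d} be a Gaussian JL map. Then Pr( ‖Gx‖ ∉ [(1−ε)·‖x‖, (1+ε)·‖x‖] ) ≤ exp(−ε²·t/8). -/
open MeasureTheory ProbabilityTheory Metric
open scoped ENNReal NNReal Classical

/-!
Write `Y = G x`: its coordinates are i.i.d. `N(0, ‖x‖²/t)`, so the claim is a two-sided tail
bound for `S = ∑ Yᵢ²`. A union bound over the two tails would cost a factor `2`, which is fatal
when `ε²t` is small, so both tails are dominated by one Chernoff weight `exp (λ (S - a))`,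
`a = (1+ε)²‖x‖²`, with `E exp (λ Yᵢ²) = 1 + ε`. The upper tail needs nothing more. For the lower
tail, rescaling by `σ = (1+ε)/(1-ε)` turns `{S < (1-ε)²‖x‖²}` into `{S < a}` for the Gaussian with
variance `σ²` times larger, whose density against the original one is `σ⁻ᵗ exp (θ S)`; since
`log σ ≥ 2ε` and `θ ≥ λ`, this density lies below the Chernoff weight on `{S < a}`. The Chernoff
integral is `exp (-t (ε + ε²/2)) (1+ε)ᵗ ≤ exp (-ε²t/2)`.
-/

open Real in
theorem Real.exp_two_mul_le_one_add_div_one_sub {ε : ℝ} (h₀ : 0 ≤ ε) (h₁ : ε < 1) :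
    exp (2 * ε) ≤ (1 + ε) / (1 - ε) := by
  have h := Real.sum_range_le_log_div h₀ h₁ 1
  simp only [Finset.sum_range_one, mul_zero, zero_add, pow_one] at h
  rw [← exp_log (by apply div_pos <;> linarith : 0 < (1 + ε) / (1 - ε))]
  exact exp_le_exp.mpr (by linarith)

namespace MeasureTheory

section Pi

variable {ι : Type*} [Fintype ι] {α : ι → Type*} [∀ i, MeasurableSpace (α i)]
  {μ : (i : ι) → Measure (α i)} [∀ i, IsProbabilityMeasure (μ i)]

theorem lintegral_fintype_prod_eq_prod {f : (i : ι) → α i → ℝ≥0∞} (hf : ∀ i, Measurable (f i)) :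
    ∫⁻ y, ∏ i, f i (y i) ∂Measure.pi μ = ∏ i, ∫⁻ z, f i z ∂μ i := by
  rw [ProbabilityTheory.lintegral_prod_eq_prod_lintegral_of_indepFun _ _
    (ProbabilityTheory.iIndepFun_pi fun i => (hf i).aemeasurable)
    fun i => (hf i).comp (measurable_pi_apply i)]
  exact Finset.prod_congr rfl fun i _ => (measurePreserving_eval μ i).lintegral_comp (hf i)

theorem Measure.pi_withDensity {f : (i : ι) → α i → ℝ≥0∞} (hf : ∀ i, Measurable (f i))
    [∀ i, SigmaFinite ((μ i).withDensity (f i))] :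
    Measure.pi (fun i => (μ i).withDensity (f i))
      = (Measure.pi μ).withDensity (fun y => ∏ i, f i (y i)) := by
  refine Measure.pi_eq fun s hs => ?_
  have hbox : (Set.univ.pi s).indicator (fun y => ∏ i, f i (y i))
      = fun y => ∏ i, (s i).indicator (f i) (y i) := by
    funext y
    simp only [Set.indicator, Set.mem_univ_pi]
    split_ifs with h
    · exact Finset.prod_congr rfl fun i _ => (if_pos (h i)).symm
    · obtain ⟨i, hi⟩ := not_forall.mp h
      exact (Finset.prod_eq_zero (Finset.mem_univ i) (if_neg hi)).symm
  rw [withDensity_apply _ (MeasurableSet.univ_pi hs),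
    ← lintegral_indicator (MeasurableSet.univ_pi hs), hbox, lintegral_fintype_prod_eq_prod fun i => (hf i).indicator (hs i)]
  exact Finset.prod_congr rfl fun i _ => by
    rw [lintegral_indicator (hs i), withDensity_apply _ (hs i)]

end Pi

open Real in
theorem measure_notMem_Icc_le_lintegral_exp {α : Type*} [MeasurableSpace α]
    {μ : Measure α} {S : α → ℝ} (hS : Measurable S) {a b k θ l : ℝ}
    (hlow : μ {x | S x < b} ≤ ∫⁻ x in {x | S x < a}, ENNReal.ofReal (k * exp (θ * S x)) ∂μ)
    (hk : k * exp (θ * a) ≤ 1) (hl : 0 ≤ l) (hlθ : l ≤ θ) :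
    μ {x | S x ∉ Set.Icc b a}
      ≤ ENNReal.ofReal (exp (-(l * a))) * ∫⁻ x, ENNReal.ofReal (exp (l * S x)) ∂μ := by
  have hlt : MeasurableSet {x | S x < a} := measurableSet_lt hS measurable_const
  have hgt : MeasurableSet {x | a < S x} := measurableSet_lt measurable_const hS
  have hdisj : Disjoint {x | S x < a} {x | a < S x} :=
    Set.disjoint_left.mpr fun x (h : S x < a) (h' : a < S x) => lt_asymm h h'
  have below : ∀ x ∈ {x | S x < a}, ENNReal.ofReal (k * exp (θ * S x))
      ≤ ENNReal.ofReal (exp (l * (S x - a))) := fun x hx => by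
    refine ENNReal.ofReal_le_ofReal ?_
    have hx' : S x - a ≤ 0 := by linarith [hx.out]
    calc k * exp (θ * S x) = k * exp (θ * a) * exp (θ * (S x - a)) := by
          rw [mul_assoc, ← exp_add]; ring_nf
      _ ≤ exp (θ * (S x - a)) := mul_le_of_le_one_left (exp_pos _).le hk
      _ ≤ exp (l * (S x - a)) := exp_le_exp.mpr (mul_le_mul_of_nonpos_right hlθ hx')
  have above : ∀ x ∈ {x | a < S x}, 1 ≤ ENNReal.ofReal (exp (l * (S x - a))) := fun x hx => by
    rw [← ENNReal.ofReal_one]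
    exact ENNReal.ofReal_le_ofReal (one_le_exp (mul_nonneg hl (by linarith [hx.out])))
  calc μ {x | S x ∉ Set.Icc b a} ≤ μ {x | S x < b} + μ {x | a < S x} := by
        refine (measure_mono fun x hx => ?_).trans (measure_union_le _ _)
        simpa only [Set.mem_ofPred_eq, Set.mem_Icc, not_and_or, not_le, Set.mem_union] using hx
    _ ≤ ∫⁻ x in {x | S x < a}, ENNReal.ofReal (exp (l * (S x - a))) ∂μ
        + ∫⁻ x in {x | a < S x}, ENNReal.ofReal (exp (l * (S x - a))) ∂μ := by
        refine add_le_add (hlow.trans (setLIntegral_mono' hlt below)) ?_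
        rw [← setLIntegral_one]
        exact setLIntegral_mono' hgt above
    _ = ∫⁻ x in {x | S x < a} ∪ {x | a < S x}, ENNReal.ofReal (exp (l * (S x - a))) ∂μ :=
        (lintegral_union hgt hdisj).symm
    _ ≤ ∫⁻ x, ENNReal.ofReal (exp (l * (S x - a))) ∂μ := setLIntegral_le_lintegral _ _
    _ = _ := by
        rw [← lintegral_const_mul _ (by fun_prop)]
        refine lintegral_congr fun x => ?_
        rw [← ENNReal.ofReal_mul (exp_pos _).le, ← exp_add]
        ring_nf

end MeasureTheory

namespace ProbabilityTheory

open Real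

/-- The `λ` with `∫ exp (λ z²) d(gaussianReal 0 v) = σ`, i.e. `1 - 2λv = σ⁻²`. -/
noncomputable def sqTiltRate (v σ : ℝ≥0) : ℝ := (1 - ((σ : ℝ) ^ 2)⁻¹) / (2 * v)

variable {ι : Type*} [Fintype ι] {v σ : ℝ≥0}

theorem sqTiltRate_nonneg (h : 1 ≤ σ) : 0 ≤ sqTiltRate v σ := by
  have : ((σ : ℝ) ^ 2)⁻¹ ≤ 1 := inv_le_one_of_one_le₀ (one_le_pow₀ (by exact_mod_cast h))
  unfold sqTiltRate
  positivity

theorem sqTiltRate_le_sqTiltRate {τ : ℝ≥0} (hσ : σ ≠ 0) (h : σ ≤ τ) :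
    sqTiltRate v σ ≤ sqTiltRate v τ := by
  unfold sqTiltRate
  gcongr

theorem gaussianPDFReal_mul_sqTilt (hv : v ≠ 0) (hσ : σ ≠ 0) (z : ℝ) :
    gaussianPDFReal 0 v z * ((σ : ℝ)⁻¹ * exp (sqTiltRate v σ * z ^ 2))
      = gaussianPDFReal 0 (σ ^ 2 * v) z := by
  have hσ' : (0 : ℝ) < σ := by positivity
  have hsqrt : √(2 * π * (σ ^ 2 * v)) = σ * √(2 * π * v) := by
    rw [show 2 * π * (σ ^ 2 * v) = (σ : ℝ) ^ 2 * (2 * π * v) by ring,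
      Real.sqrt_mul (by positivity), Real.sqrt_sq hσ'.le]
  have hexp : exp (-z ^ 2 / (2 * v)) * exp ((1 - ((σ : ℝ) ^ 2)⁻¹) / (2 * v) * z ^ 2)
      = exp (-z ^ 2 / (2 * (σ ^ 2 * v))) := by
    rw [← exp_add]; congr 1; field_simp; ring
  simp only [gaussianPDFReal, sqTiltRate, NNReal.coe_mul, NNReal.coe_pow, sub_zero, hsqrt, ← hexp]
  field_simp

theorem gaussianReal_withDensity_sqTilt (hv : v ≠ 0) (hσ : σ ≠ 0) :
    (gaussianReal 0 v).withDensity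
        (fun z => ENNReal.ofReal ((σ : ℝ)⁻¹ * exp (sqTiltRate v σ * z ^ 2)))
      = gaussianReal 0 (σ ^ 2 * v) := by
  rw [gaussianReal_of_var_ne_zero _ hv, gaussianReal_of_var_ne_zero _ (by positivity),
    ← withDensity_mul _ (measurable_gaussianPDF 0 v) (by fun_prop)]
  congr 1
  funext z
  rw [Pi.mul_apply, gaussianPDF, gaussianPDF, ← ENNReal.ofReal_mul (gaussianPDFReal_nonneg _ _ _),
    gaussianPDFReal_mul_sqTilt hv hσ]
theorem pi_gaussianReal_eq_withDensity (hv : v ≠ 0) (hσ : σ ≠ 0) :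
    Measure.pi (fun _ : ι => gaussianReal 0 (σ ^ 2 * v))
      = (Measure.pi fun _ : ι => gaussianReal 0 v).withDensity (fun y => ENNReal.ofReal
          ((σ : ℝ)⁻¹ ^ Fintype.card ι * exp (sqTiltRate v σ * ∑ i, y i ^ 2))) := by
  have : SigmaFinite ((gaussianReal 0 v).withDensity
      (fun z => ENNReal.ofReal ((σ : ℝ)⁻¹ * exp (sqTiltRate v σ * z ^ 2)))) := by
    rw [gaussianReal_withDensity_sqTilt hv hσ]; infer_instance
  simp_rw [← gaussianReal_withDensity_sqTilt hv hσ]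
  rw [Measure.pi_withDensity fun _ => by fun_prop]
  congr 1
  funext y
  rw [← ENNReal.ofReal_prod_of_nonneg fun i _ => by positivity, Finset.prod_mul_distrib,
    Finset.prod_const, Finset.card_univ, Finset.mul_sum, exp_sum]

theorem lintegral_exp_sqTiltRate_mul_sumSq (hv : v ≠ 0) (hσ : σ ≠ 0) :
    ∫⁻ y, ENNReal.ofReal (exp (sqTiltRate v σ * ∑ i, y i ^ 2))
        ∂(Measure.pi fun _ : ι => gaussianReal 0 v)
      = ENNReal.ofReal ((σ : ℝ) ^ Fintype.card ι) := by
  have hσ' : (0 : ℝ) < σ := by positivity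
  have htotal := congrArg (· Set.univ) (pi_gaussianReal_eq_withDensity (ι := ι) hv hσ)
  simp only [measure_univ, withDensity_apply _ MeasurableSet.univ, Measure.restrict_univ] at htotal
  simp_rw [ENNReal.ofReal_mul (by positivity : (0 : ℝ) ≤ (σ : ℝ)⁻¹ ^ Fintype.card ι)] at htotal
  rw [lintegral_const_mul _ (by fun_prop)] at htotal
  rw [← one_mul (lintegral _ _), ← ENNReal.ofReal_one,
    ← mul_inv_cancel₀ (pow_ne_zero (Fintype.card ι) hσ'.ne'), ← inv_pow,
    ENNReal.ofReal_mul (by positivity), mul_assoc, ← htotal, mul_one]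

theorem map_pi_gaussianReal_const_mul (hσ : σ ≠ 0) :
    (Measure.pi fun _ : ι => gaussianReal 0 (σ ^ 2 * v)).map (fun y i => (σ : ℝ)⁻¹ * y i)
      = Measure.pi fun _ : ι => gaussianReal 0 v := by
  rw [Measure.pi_map_pi fun _ => (measurable_const_mul _).aemeasurable]
  congr 1
  funext i
  rw [gaussianReal_map_const_mul, mul_zero]
  congr 1
  ext
  push_cast
  field_simp

theorem pi_gaussianReal_sumSq_lt (hv : v ≠ 0) (hσ : σ ≠ 0) (a : ℝ) :
    (Measure.pi fun _ : ι => gaussianReal 0 v) {y | ∑ i, y i ^ 2 < ((σ : ℝ) ^ 2)⁻¹ * a}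
      = ∫⁻ y in {y | ∑ i, y i ^ 2 < a}, ENNReal.ofReal
          ((σ : ℝ)⁻¹ ^ Fintype.card ι * exp (sqTiltRate v σ * ∑ i, y i ^ 2))
          ∂(Measure.pi fun _ : ι => gaussianReal 0 v) := by
  have hmeas : MeasurableSet {y : ι → ℝ | ∑ i, y i ^ 2 < a} :=
    measurableSet_lt (by fun_prop) (by fun_prop)
  rw [← withDensity_apply _ hmeas, ← pi_gaussianReal_eq_withDensity hv hσ,
    ← map_pi_gaussianReal_const_mul hσ, Measure.map_apply (by fun_prop)
      (measurableSet_lt (by fun_prop) (by fun_prop))]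
  congr 1
  ext y
  simp only [Set.mem_preimage, Set.mem_ofPred_eq, mul_pow, ← Finset.mul_sum, inv_pow]
  exact mul_lt_mul_iff_right₀ (by positivity)

theorem pi_gaussianReal_sumSq_notMem_Icc_le_of_tilt (hv : v ≠ 0) {σ₁ σ₂ : ℝ≥0} (hσ₂ : 1 ≤ σ₂)
    (hσ : σ₂ ≤ σ₁) {a : ℝ} (hk : (σ₁ : ℝ)⁻¹ ^ Fintype.card ι * exp (sqTiltRate v σ₁ * a) ≤ 1) :
    (Measure.pi fun _ : ι => gaussianReal 0 v)
        {y | ∑ i, y i ^ 2 ∉ Set.Icc (((σ₁ : ℝ) ^ 2)⁻¹ * a) a}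
      ≤ ENNReal.ofReal (exp (-(sqTiltRate v σ₂ * a)) * σ₂ ^ Fintype.card ι) := by
  have hσ₂0 : σ₂ ≠ 0 := (zero_lt_one.trans_le hσ₂).ne'
  have hσ₁0 : σ₁ ≠ 0 := (zero_lt_one.trans_le (hσ₂.trans hσ)).ne'
  refine (measure_notMem_Icc_le_lintegral_exp (by fun_prop) (pi_gaussianReal_sumSq_lt hv hσ₁0 a).le
    hk (sqTiltRate_nonneg hσ₂) (sqTiltRate_le_sqTiltRate hσ₂0 hσ)).trans_eq ?_
  rw [lintegral_exp_sqTiltRate_mul_sumSq hv hσ₂0, ← ENNReal.ofReal_mul (exp_pos _).le]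

theorem pi_gaussianReal_sumSq_notMem_Icc_le (hv : v ≠ 0) {ε : ℝ} (hε₀ : 0 < ε) (hε₁ : ε < 1) :
    (Measure.pi fun _ : ι => gaussianReal 0 v)
        {y | ∑ i, y i ^ 2 ∉ Set.Icc ((1 - ε) ^ 2 * (Fintype.card ι * v))
          ((1 + ε) ^ 2 * (Fintype.card ι * v))}
      ≤ ENNReal.ofReal (exp (-(ε ^ 2 * Fintype.card ι) / 2)) := by
  set n := Fintype.card ι
  set a := (1 + ε) ^ 2 * (n * v)
  -- `σ₁` rescales the lower tail onto the upper one, `σ₂` is the Chernoff tilt.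
  set σ₁ : ℝ≥0 := ⟨(1 + ε) / (1 - ε), (div_pos (by linarith) (by linarith)).le⟩
  set σ₂ : ℝ≥0 := ⟨1 + ε, by linarith⟩
  have hσ₁ : (σ₁ : ℝ) = (1 + ε) / (1 - ε) := rfl
  have hσ₂ : (σ₂ : ℝ) = 1 + ε := rfl
  have hσ₂1 : 1 ≤ σ₂ := by rw [← NNReal.coe_le_coe, hσ₂, NNReal.coe_one]; linarith
  have hσ₁₂ : σ₂ ≤ σ₁ := by
    rw [← NNReal.coe_le_coe, hσ₁, hσ₂, le_div_iff₀ (by linarith)]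
    nlinarith
  have hb : (1 - ε) ^ 2 * (n * v) = ((σ₁ : ℝ) ^ 2)⁻¹ * a := by
    rw [hσ₁]
    field_simp
    ring
  have hθa : sqTiltRate v σ₁ * a = n * (2 * ε) := by
    rw [sqTiltRate, hσ₁]
    field_simp
    ring
  have hla : sqTiltRate v σ₂ * a = n * (ε + ε ^ 2 / 2) := by
    rw [sqTiltRate, hσ₂]
    field_simp
    ring
  have hk : (σ₁ : ℝ)⁻¹ ^ n * exp (sqTiltRate v σ₁ * a) ≤ 1 := by
    rw [hθa, exp_nat_mul, ← mul_pow]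
    refine pow_le_one₀ (by positivity) ?_
    rw [inv_mul_le_one₀ (by rw [hσ₁]; exact div_pos (by linarith) (by linarith)), hσ₁]
    exact exp_two_mul_le_one_add_div_one_sub hε₀.le hε₁
  have hpow : (1 + ε) ^ n ≤ exp (n * ε) := by
    rw [exp_nat_mul]
    exact pow_le_pow_left₀ (by linarith) (by linarith [add_one_le_exp ε]) n
  rw [hb]
  refine (pi_gaussianReal_sumSq_notMem_Icc_le_of_tilt hv hσ₂1 hσ₁₂ hk).trans
    (ENNReal.ofReal_le_ofReal ?_)
  calc _ ≤ exp (-(sqTiltRate v σ₂ * a)) * exp (n * ε) := by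
        rw [hσ₂]
        exact mul_le_mul_of_nonneg_left hpow (exp_pos _).le
    _ = _ := by rw [hla, ← exp_add]; ring_nf

theorem map_sum_mul_pi_gaussianReal (x : EuclideanSpace ℝ ι) :
    (Measure.pi fun _ : ι => gaussianReal 0 v).map (fun g => ∑ j, g j * x j)
      = gaussianReal 0 (‖x‖₊ ^ 2 * v) := by
  have hcomp : (fun g : ι → ℝ => ∑ j, g j * x j) = (fun p => ∑ j, p j) ∘ (fun g j => g j * x j) :=
    rfl
  rw [hcomp, ← Measure.map_map (by fun_prop) (by fun_prop),
    Measure.pi_map_pi fun _ => (measurable_mul_const _).aemeasurable]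
  simp_rw [gaussianReal_map_mul_const, mul_zero]
  refine Measure.ext_of_charFun ?_
  rw [charFun_map_sum_pi_eq_prod]
  funext s
  simp only [Finset.prod_apply, charFun_gaussianReal, ← Complex.exp_sum]
  congr 1
  have hx : ((‖x‖ : ℝ) : ℂ) ^ 2 = ∑ j, ((x j : ℝ) : ℂ) ^ 2 := by
    exact_mod_cast EuclideanSpace.real_norm_sq_eq x
  push_cast
  simp [hx, Finset.sum_mul, Finset.sum_div]

end ProbabilityTheory

theorem map_gaussianJL_eq_pi (t d : ℕ) (x : EuclideanSpace ℝ (Fin d)) :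
    (gaussianJL t d).map (fun G i => ∑ j, G i j * x j)
      = Measure.pi fun _ : Fin t => gaussianReal 0 (‖x‖₊ ^ 2 * (t : ℝ≥0)⁻¹) := by
  refine (Measure.pi_map_pi (f := fun _ (g : Fin d → ℝ) => ∑ j, g j * x j)
    fun _ => (Finset.measurable_sum _ fun j _ => by fun_prop).aemeasurable).trans ?_
  simp_rw [map_sum_mul_pi_gaussianReal]

theorem norm_appJL_sq {t d : ℕ} (G : Fin t → Fin d → ℝ) (x : EuclideanSpace ℝ (Fin d)) :
    ‖appJL G x‖ ^ 2 = ∑ i, (∑ j, G i j * x j) ^ 2 := by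
  rw [appJL, EuclideanSpace.real_norm_sq_eq]

theorem setOf_norm_appJL_notMem_Icc {t d : ℕ} {x : EuclideanSpace ℝ (Fin d)} {p q : ℝ}
    (hp : 0 ≤ p) (hq : 0 ≤ q) :
    {G : Fin t → Fin d → ℝ | ‖appJL G x‖ ∉ Set.Icc (p * ‖x‖) (q * ‖x‖)}
      = (fun G i => ∑ j, G i j * x j) ⁻¹'
          {y | ∑ i, y i ^ 2 ∉ Set.Icc (p ^ 2 * ‖x‖ ^ 2) (q ^ 2 * ‖x‖ ^ 2)} := by
  ext G
  simp only [Set.mem_ofPred_eq, Set.mem_preimage, ← norm_appJL_sq, ← mul_pow, Set.mem_Icc,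
    sq_le_sq₀ (by positivity : 0 ≤ p * ‖x‖) (norm_nonneg _),
    sq_le_sq₀ (norm_nonneg _) (by positivity : 0 ≤ q * ‖x‖)]

/-- Gaussian concentration for a single vector: a Gaussian JL map onto dimension t
distorts the norm of x by more than a 1±ε factor with probability at most
exp(−ε²t/8). -/
theorem gaussian_JL_single_vector_concentration {d : ℕ}
    (x : EuclideanSpace ℝ (Fin d)) (ε : ℝ) (hε : ε ∈ Set.Ioo (0 : ℝ) 1)
    (t : ℕ) (ht : 1 ≤ t) :
    gaussianJL t d {G | ‖appJL G x‖ ∉ Set.Icc ((1 - ε) * ‖x‖) ((1 + ε) * ‖x‖)} ≤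
      ENNReal.ofReal (Real.exp (-(ε ^ 2 * t) / 8)) := by
  obtain ⟨hε₀, hε₁⟩ := hε
  rcases eq_or_ne x 0 with rfl | hx
  · simp [appJL, Pi.zero_def]
  set v : ℝ≥0 := ‖x‖₊ ^ 2 * (t : ℝ≥0)⁻¹
  have hv : v ≠ 0 := by simp [v, hx]; omega
  have hnv : (Fintype.card (Fin t) * v : ℝ) = ‖x‖ ^ 2 := by
    simp only [Fintype.card_fin, v, NNReal.coe_mul, NNReal.coe_pow, coe_nnnorm, NNReal.coe_inv,
      NNReal.coe_natCast]
    field_simp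
  rw [setOf_norm_appJL_notMem_Icc (by linarith) (by linarith), ← hnv,
    ← Measure.map_apply (by fun_prop) (by measurability), map_gaussianJL_eq_pi]
  refine (pi_gaussianReal_sumSq_notMem_Icc_le hv hε₀ hε₁).trans
    (ENNReal.ofReal_le_ofReal (Real.exp_le_exp.mpr ?_))
  rw [Fintype.card_fin]
  have : 0 ≤ ε ^ 2 * t := by positivity
  linarith
end
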